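/- Characterization used in the counting proof: fix a word z = z₁⋯z_l with distinct letters and integers 1 = k₁ < k₂ < ⋯ < k_l < k_{l+1} = p+1. A word w of length 2p is strongly synchronizing with trace z and first-occurrence indices (k₁,...,k_l) if and only if for every i ∈ {1,...,l}: (a) w_{p+k_i} = z_i, and (b) for every j ∈ {k_i,...,k_{i+1}−1}, w_{p+j} ∈ {z₁,...,z_i} and w_j lies in the complement of E({z₁,...,z_i}). -/

import Mathlib

/-- Word-profile state of the matching model with deterministic patience `p`:
a list of length `p` over `𝕍 ∪ {0}`, oldest item first; `none` encodes the letter `0`. -/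
abbrev MState (V : Type*) := List (Option V)

/-- An admissible matching policy: given the current word-profile and the class of the
arriving item, it either returns the position of the stored item it is matched with
(which must hold a compatible class), or `none`, which is only allowed when no stored
item is compatible. -/
def Admissible {V : Type*} (G : SimpleGraph V) (Φ : MState V → V → Option ℕ) : Prop :=
  ∀ (x : MState V) (c : V),
    (∀ i : ℕ, Φ x c = some i → ∃ d : V, x.getD i none = some d ∧ G.Adj c d) ∧
    (Φ x c = none → ∀ (i : ℕ) (d : V), x.getD i none = some d → ¬ G.Adj c d)

/-- One step of the word-profile chain under policy `Φ`: the match (if any) is erased and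
replaced by `0`, the oldest item leaves, and the arrival is recorded (as its class if
unmatched, as `0` if matched). -/
def mstep {V : Type*} (Φ : MState V → V → Option ℕ) (x : MState V) (c : V) : MState V :=
  match Φ x c with
  | some i => (x.set i none).tail ++ [none]
  | none => x.tail ++ [some c]

/-- `W Φ x w`: state reached from `x` after feeding the arrival word `w`. -/
def W {V : Type*} (Φ : MState V → V → Option ℕ) (x : MState V) (w : List V) : MState V :=
  w.foldl (mstep Φ) x

/-- The First Come, First Matched policy: the arrival is matched with the oldest
compatible stored item, if any. -/
def fcfm {V : Type*} (G : SimpleGraph V) [DecidableRel G.Adj] :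
    MState V → V → Option ℕ :=
  fun x c => x.findIdx? (fun o => o.elim false fun d => decide (G.Adj c d))

/-- A word `w` of length `2p` is strongly synchronizing if (1-indexed) `w_i ⌣̸ w_j` for all
`i ∈ {1,…,p}` and `j ∈ {p+1,…,p+i}`; here indices are 0-based. -/
def StronglySync {V : Type*} [Inhabited V] (G : SimpleGraph V) (p : ℕ) (w : List V) : Prop :=
  w.length = 2 * p ∧
    ∀ i j : ℕ, i < p → p ≤ j → j ≤ p + i → ¬ G.Adj (w.getD i default) (w.getD j default)

/-- The trace of a word: its distinct letters in order of first appearance. -/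
def trace {V : Type*} [DecidableEq V] (l : List V) : List V :=
  l.foldl (fun acc c => if c ∈ acc then acc else acc ++ [c]) []

/-!
Write `u` for the second half of `w`. Cutting `u` at the indices `κ i` into blocks, conditions
(a) and the first half of (b) say that the `i`-th block starts with `z_i` and otherwise uses only
`z_0, …, z_i`. As `z` has no repeated letter, this says precisely that `z_i` first occurs at `κ i`
and, by induction over the blocks, that the trace of `u` is `z`. Given this block structure, the
letters `u_t` with `t ≤ j` are exactly `z_0, …, z_i` when `j` lies in the `i`-th block, so strong
synchronization (`w_j ≁ u_t` for `t ≤ j`) becomes `w_j ∉ E({z_0, …, z_i})`.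
-/

namespace List

variable {V : Type*} {l : List V} {d : V}

theorem getD_drop (l : List V) (n j : ℕ) (d : V) : (l.drop n).getD j d = l.getD (n + j) d := by
  simp [getD_eq_getElem?_getD]

theorem getD_mem {n : ℕ} (hn : n < l.length) : l.getD n d ∈ l := by
  rw [getD_eq_getElem _ _ hn]
  exact getElem_mem hn

theorem exists_getD_eq_of_mem {c : V} (hc : c ∈ l) : ∃ j < l.length, l.getD j d = c := by
  obtain ⟨j, hj, rfl⟩ := mem_iff_getElem.1 hc
  exact ⟨j, hj, getD_eq_getElem _ _ hj⟩

theorem getD_mem_take {m n : ℕ} (hmn : m < n) (hm : m < l.length) : l.getD m d ∈ l.take n := by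
  rw [getD_eq_getElem _ _ hm, ← getElem_take (j := n) (h := by simp; omega)]
  exact getElem_mem _

theorem Nodup.getD_notMem_take (hl : l.Nodup) {i : ℕ} (hi : i < l.length) :
    l.getD i d ∉ l.take i := by
  have hdrop : l.getD i d ∈ l.drop i := by
    rw [drop_eq_getElem_cons hi, getD_eq_getElem _ _ hi]
    exact mem_cons_self
  exact fun htake => disjoint_take_drop hl le_rfl htake hdrop

end List

section Trace

variable {V : Type*} [DecidableEq V]

theorem trace_nil : trace ([] : List V) = [] := rfl

theorem trace_append_singleton (l : List V) (c : V) :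
    trace (l ++ [c]) = if c ∈ trace l then trace l else trace l ++ [c] := by
  rw [trace, List.foldl_append]
  rfl

@[simp]
theorem mem_trace {l : List V} {c : V} : c ∈ trace l ↔ c ∈ l := by
  induction l using List.reverseRecOn with
  | nil => rfl
  | append_singleton l a ih =>
    rw [trace_append_singleton]
    split_ifs with ha
    · grind
    · simp [ih]

theorem trace_take_add_one {l : List V} {n : ℕ} (hn : n < l.length) :
    trace (l.take (n + 1)) =
      if l[n] ∈ l.take n then trace (l.take n) else trace (l.take n) ++ [l[n]] := by
  rw [← List.take_concat_get' l n hn, trace_append_singleton]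
  simp only [mem_trace]

theorem trace_take_eq_of_forall_mem {l : List V} {d : V} {a b : ℕ} (hab : a ≤ b)
    (hb : b ≤ l.length) (h : ∀ j, a ≤ j → j < b → l.getD j d ∈ trace (l.take a)) :
    trace (l.take b) = trace (l.take a) := by
  induction b, hab using Nat.le_induction with
  | base => rfl
  | succ b hab ih =>
    have hlt : b < l.length := by omega
    have ih := ih (by omega) fun j h1 h2 => h j h1 (by omega)
    have hmem : l[b] ∈ l.take b := by
      rw [← mem_trace, ih, ← List.getD_eq_getElem _ d hlt]
      exact h b hab (by omega)
    rw [trace_take_add_one hlt, if_pos hmem, ih]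

end Trace

theorem sInf_getD_eq_iff {V : Type*} {u : List V} {d c : V} (hc : c ∈ u) (k : ℕ) :
    sInf {j | j < u.length ∧ u.getD j d = c} = k ↔
      (k < u.length ∧ u.getD k d = c) ∧ ∀ j < u.length, u.getD j d = c → k ≤ j := by
  obtain ⟨j, hj, hjc⟩ := List.exists_getD_eq_of_mem (d := d) hc
  have hne : {j | j < u.length ∧ u.getD j d = c}.Nonempty := ⟨j, hj, hjc⟩
  rw [csInf_eq_iff hne]
  simp only [Set.mem_ofPred_eq, and_imp]

theorem exists_block_index {κ : ℕ → ℕ} {l j : ℕ} (h0 : κ 0 ≤ j) (hl : j < κ l) :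
    ∃ m < l, κ m ≤ j ∧ j < κ (m + 1) := by
  induction l with
  | zero => omega
  | succ l ih =>
    by_cases hj : j < κ l
    · obtain ⟨m, hm, h⟩ := ih hj
      exact ⟨m, by omega, h⟩
    · exact ⟨l, by omega, by omega, hl⟩

-- Conditions (a) and the first half of (b), read on the second half `y j = w_{p+j}` of the word.
def BlockProfile {V : Type*} (y : ℕ → V) (z : List V) (κ : ℕ → ℕ) (d : V) : Prop :=
  ∀ i < z.length, y (κ i) = z.getD i d ∧ ∀ j, κ i ≤ j → j < κ (i + 1) → y j ∈ z.take (i + 1)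

section BlockProfile

variable {V : Type*} {z : List V} {κ : ℕ → ℕ} {d : V}

theorem forall_not_adj_iff_of_blockProfile (G : SimpleGraph V) {x y : ℕ → V} {p : ℕ}
    (hκ0 : κ 0 = 0) (hκ : StrictMonoOn κ (Set.Iic z.length)) (hκlast : κ z.length = p)
    (hy : BlockProfile y z κ d) :
    (∀ a t, a < p → t ≤ a → ¬ G.Adj (x a) (y t)) ↔
      ∀ i < z.length, ∀ j, κ i ≤ j → j < κ (i + 1) → ∀ c ∈ z.take (i + 1), ¬ G.Adj (x j) c := by
  constructor
  · intro hss i hi j h1 h2 c hc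
    obtain ⟨m, hm, rfl⟩ := List.mem_take_iff_getElem.1 hc
    have hm' : m ≤ i ∧ m < z.length := by omega
    rw [← List.getD_eq_getElem _ d, ← (hy m hm'.2).1]
    have hκm : κ m ≤ κ i := hκ.monotoneOn (Set.mem_Iic.2 hm'.2.le) (Set.mem_Iic.2 hi.le) hm'.1
    have hκi : κ (i + 1) ≤ p :=
      hκlast ▸ hκ.monotoneOn (Set.mem_Iic.2 hi) (Set.mem_Iic.2 le_rfl) hi
    exact hss j (κ m) (by omega) (by omega)
  · intro h a t ha hta
    obtain ⟨m, hm, h1, h2⟩ := exists_block_index (by omega) (hκlast ▸ ha)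
    obtain ⟨m', hm', h1', h2'⟩ := exists_block_index (by omega) (hκlast ▸ hta.trans_lt ha)
    have hm'm : m' < m + 1 := (hκ.lt_iff_lt (Set.mem_Iic.2 hm'.le) (Set.mem_Iic.2 hm)).1 <|
      h1'.trans_lt (hta.trans_lt h2)
    exact h m hm a h1 h2 _ (List.take_subset_take_left z hm'm ((hy m' hm').2 t h1' h2'))

variable [DecidableEq V] {u : List V}

theorem blockProfile_of_trace_eq (hκ : StrictMonoOn κ (Set.Iic z.length))
    (hκlast : κ z.length = u.length) (htr : trace u = z)
    (hinf : ∀ i < z.length, sInf {j | j < u.length ∧ u.getD j d = z.getD i d} = κ i) :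
    BlockProfile (u.getD · d) z κ d := by
  have hfirst : ∀ m < z.length, (κ m < u.length ∧ u.getD (κ m) d = z.getD m d) ∧
      ∀ j < u.length, u.getD j d = z.getD m d → κ m ≤ j := fun m hm =>
    (sInf_getD_eq_iff (by rw [← mem_trace, htr]; exact List.getD_mem hm) _).1 (hinf m hm)
  refine fun i hi => ⟨(hfirst i hi).1.2, fun j h1 h2 => ?_⟩
  have hj : j < u.length := h2.trans_le <|
    hκlast ▸ hκ.monotoneOn (Set.mem_Iic.2 hi) (Set.mem_Iic.2 le_rfl) hi
  obtain ⟨m, hm, hmj⟩ :=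
    List.exists_getD_eq_of_mem (d := d) (htr ▸ mem_trace.2 (List.getD_mem hj))
  have hmi : m < i + 1 := (hκ.lt_iff_lt (Set.mem_Iic.2 hm.le) (Set.mem_Iic.2 hi)).1 <|
    ((hfirst m hm).2 j hj hmj.symm).trans_lt h2
  show u.getD j d ∈ _
  rw [← hmj]
  exact List.getD_mem_take hmi hm

theorem trace_take_eq_of_blockProfile (hz : z.Nodup) (hκ0 : κ 0 = 0)
    (hκ : StrictMonoOn κ (Set.Iic z.length)) (hκlast : κ z.length = u.length)
    (h : BlockProfile (u.getD · d) z κ d) {i : ℕ} (hi : i ≤ z.length) :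
    trace (u.take (κ i)) = z.take i := by
  induction i with
  | zero => simp [hκ0, trace_nil]
  | succ i ih =>
    have hi' : i < z.length := by omega
    have ih := ih hi'.le
    have hκi : κ i < κ (i + 1) := hκ (Set.mem_Iic.2 hi'.le) (Set.mem_Iic.2 hi) i.lt_succ_self
    have hκle : κ (i + 1) ≤ u.length :=
      hκlast ▸ hκ.monotoneOn (Set.mem_Iic.2 hi) (Set.mem_Iic.2 le_rfl) hi
    have hzi : u[κ i] = z[i] := by
      rw [← List.getD_eq_getElem _ d, ← List.getD_eq_getElem _ d]
      exact (h i hi').1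
    have hnew : u[κ i] ∉ u.take (κ i) := by
      rw [← mem_trace, ih, hzi, ← List.getD_eq_getElem _ d]
      exact hz.getD_notMem_take hi'
    have hstep : trace (u.take (κ i + 1)) = z.take (i + 1) := by
      rw [trace_take_add_one (by omega), if_neg hnew, ih, hzi, List.take_concat_get']
    rw [← hstep]
    refine trace_take_eq_of_forall_mem (d := d) hκi hκle fun j h1 h2 => ?_
    rw [hstep]
    exact (h i hi').2 j (by omega) h2

theorem trace_eq_and_sInf_eq_iff (hz : z.Nodup) (hκ0 : κ 0 = 0)
    (hκ : StrictMonoOn κ (Set.Iic z.length)) (hκlast : κ z.length = u.length) :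
    (trace u = z ∧
        ∀ i < z.length, sInf {j | j < u.length ∧ u.getD j d = z.getD i d} = κ i) ↔
      BlockProfile (u.getD · d) z κ d := by
  refine ⟨fun ⟨htr, hinf⟩ => blockProfile_of_trace_eq hκ hκlast htr hinf, fun h => ⟨?_, ?_⟩⟩
  · simpa [hκlast] using trace_take_eq_of_blockProfile hz hκ0 hκ hκlast h le_rfl
  · intro i hi
    have hκi : κ i < u.length := hκlast ▸ hκ (Set.mem_Iic.2 hi.le) (Set.mem_Iic.2 le_rfl) hi
    have hprefix : ∀ j < κ i, u.getD j d ∈ z.take i := fun j hj => by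
      obtain ⟨m, hm, h1, h2⟩ := exists_block_index (by omega) hj
      exact List.take_subset_take_left z hm ((h m (by omega)).2 j h1 h2)
    rw [sInf_getD_eq_iff ((h i hi).1 ▸ List.getD_mem hκi)]
    refine ⟨⟨hκi, (h i hi).1⟩, fun j _ hji => ?_⟩
    by_contra! hlt
    exact hz.getD_notMem_take hi (hji ▸ hprefix j hlt)

end BlockProfile

theorem stronglySync_iff {V : Type*} [Inhabited V] {G : SimpleGraph V} {p : ℕ} {w : List V} :
    StronglySync G p w ↔ w.length = 2 * p ∧
      ∀ a t, a < p → t ≤ a → ¬ G.Adj (w.getD a default) (w.getD (p + t) default) := by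
  refine and_congr_right' ⟨fun h a t ha hta => h a (p + t) ha (by omega) (by omega), ?_⟩
  intro h i j hi hj1 hj2
  obtain ⟨t, rfl⟩ := Nat.exists_eq_add_of_le hj1
  exact h i t hi (by omega)

-- Indices are 0-based: the paper's `1 = k₁ < ⋯ < k_{l+1} = p+1` is `0 = κ 0 < ⋯ < κ l = p`.
theorem stmt17_general {V : Type*} [Inhabited V] [DecidableEq V] (G : SimpleGraph V)
    (p : ℕ)
    (z : List V) (hz : z.Nodup)
    (κ : ℕ → ℕ) (hκ0 : κ 0 = 0)
    (hκmono : ∀ i : ℕ, i < z.length → κ i < κ (i + 1))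
    (hκlast : κ z.length = p)
    (w : List V) (hw : w.length = 2 * p) :
    (StronglySync G p w ∧ trace (w.drop p) = z ∧
        ∀ i : ℕ, i < z.length →
          sInf {j : ℕ | j < p ∧ w.getD (p + j) default = z.getD i default} = κ i) ↔
    (∀ i : ℕ, i < z.length →
        w.getD (p + κ i) default = z.getD i default ∧
        ∀ j : ℕ, κ i ≤ j → j < κ (i + 1) →
          w.getD (p + j) default ∈ z.take (i + 1) ∧
          ∀ c ∈ z.take (i + 1), ¬ G.Adj (w.getD j default) c) := by
  have hκ : StrictMonoOn κ (Set.Iic z.length) := strictMonoOn_Iic_of_lt_succ hκmono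
  have hu : (w.drop p).length = p := by simp [hw]; omega
  have htrace := trace_eq_and_sInf_eq_iff (u := w.drop p) (d := default) hz hκ0 hκ
    (hκlast.trans hu.symm)
  simp only [hu, List.getD_drop] at htrace
  rw [stronglySync_iff, and_iff_right hw]
  constructor
  · rintro ⟨hss, htr⟩
    have hy := htrace.1 htr
    have hx := (forall_not_adj_iff_of_blockProfile G hκ0 hκ hκlast hy).1 hss
    exact fun i hi => ⟨(hy i hi).1, fun j h1 h2 => ⟨(hy i hi).2 j h1 h2, hx i hi j h1 h2⟩⟩
  · intro h
    have hy : BlockProfile (fun j => w.getD (p + j) default) z κ default :=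
      fun i hi => ⟨(h i hi).1, fun j h1 h2 => ((h i hi).2 j h1 h2).1⟩
    refine ⟨(forall_not_adj_iff_of_blockProfile G hκ0 hκ hκlast hy).2 ?_, htrace.2 hy⟩
    exact fun i hi j h1 h2 => ((h i hi).2 j h1 h2).2

/-- Characterization used in the counting proof (0-based indices: the paper's
`1 = k₁ < ⋯ < k_l < k_{l+1} = p+1` becomes `0 = κ₀ < ⋯ < κ_{l-1} < κ_l = p`):
a word `w` of length `2p` is strongly synchronizing with trace `z` and first-occurrence
indices `κ` iff for every `i < l`: (a) `w_{p+κ_i} = z_i`, and (b) for every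
`j ∈ [κ_i, κ_{i+1})`, `w_{p+j} ∈ {z₀,…,z_i}` and `w_j ∉ E({z₀,…,z_i})`. -/
theorem stmt17 {V : Type*} [Inhabited V] [DecidableEq V] (G : SimpleGraph V)
    (p : ℕ) (hp : 0 < p)
    (z : List V) (hz : z.Nodup)
    (κ : ℕ → ℕ) (hκ0 : κ 0 = 0)
    (hκmono : ∀ i : ℕ, i < z.length → κ i < κ (i + 1))
    (hκlast : κ z.length = p)
    (w : List V) (hw : w.length = 2 * p) :
    (StronglySync G p w ∧ trace (w.drop p) = z ∧
        ∀ i : ℕ, i < z.length →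
          sInf {j : ℕ | j < p ∧ w.getD (p + j) default = z.getD i default} = κ i) ↔
    (∀ i : ℕ, i < z.length →
        w.getD (p + κ i) default = z.getD i default ∧
        ∀ j : ℕ, κ i ≤ j → j < κ (i + 1) →
          w.getD (p + j) default ∈ z.take (i + 1) ∧
          ∀ c ∈ z.take (i + 1), ¬ G.Adj (w.getD j default) c) :=
  stmt17_general G p z hz κ hκ0 hκmono hκlast w hw
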